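/- For all m ≥ 1, n ≥ 0, positive reals x_1,…,x_m, and integers p_1,…,p_m, Abel's multinomial sum satisfies the recurrence A_n(x_1,…,x_m; p_1,…,p_m) = Σ_{s=0}^n ( n choose s ) · s! · (x_1 + s) · A_{n−s}(x_1 + s, x_2, …, x_m; p_1 − 1, p_2, …, p_m). -/

import Mathlib

/-! Splitting off the first coordinate gives `A_n = Σ_a C(n,a) (x_1+a)^(a+p_1) A'_{n-a}`, where `A'`
is the sum over the remaining coordinates. Expanding both sides this way and collecting the terms
with `s + c = a`, the recurrence reduces, for each `a`, to the telescoping identity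
`Σ_{s ≤ a} a!/(a-s)! (y - (a-s)) y^(a-s) = y^(a+1)` at `y = x_1 + a`. -/

open Finset

/-- Abel's multinomial sum
`A_n(x_1,…,x_m; p_1,…,p_m) = Σ_{s_1+⋯+s_m=n} multinomial(n; s) ∏_j (s_j + x_j)^(s_j + p_j)`,
the sum running over `m`-tuples of nonnegative integers summing to `n`, with integer
exponents interpreted as integer powers of positive reals. -/
noncomputable def abelSum (m n : ℕ) (x : Fin m → ℝ) (p : Fin m → ℤ) : ℝ :=
  ∑ s ∈ Finset.Nat.antidiagonalTuple m n,
    (Nat.multinomial Finset.univ s : ℝ) * ∏ j, ((s j : ℝ) + x j) ^ ((s j : ℤ) + p j)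

theorem Finset.Nat.sum_antidiagonalTuple_succ {M : Type*} [AddCommMonoid M] (k n : ℕ)
    (f : (Fin (k + 1) → ℕ) → M) :
    ∑ s ∈ antidiagonalTuple (k + 1) n, f s =
      ∑ a ∈ range (n + 1), ∑ t ∈ antidiagonalTuple k (n - a), f (Fin.cons a t) := by
  rw [sum_sigma']
  refine (sum_nbij' (fun q => Fin.cons q.1 q.2) (fun s => ⟨s 0, Fin.tail s⟩)
    ?_ ?_ ?_ ?_ ?_).symm
  · rintro ⟨a, t⟩ h
    simp only [mem_sigma, mem_range, mem_antidiagonalTuple] at h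
    simp only [mem_antidiagonalTuple, Fin.sum_cons, h.2]
    omega
  · intro s hs
    rw [mem_antidiagonalTuple, Fin.sum_univ_succ] at hs
    simp only [mem_sigma, mem_range, mem_antidiagonalTuple, Fin.tail]
    omega
  · intro q _; simp
  · intro s _; exact Fin.cons_self_tail s
  · intro q _; rfl

theorem Nat.multinomial_univ_fin_cons {k : ℕ} (a : ℕ) (t : Fin k → ℕ) :
    Nat.multinomial univ (Fin.cons a t : Fin (k + 1) → ℕ) =
      (a + ∑ i, t i).choose a * Nat.multinomial univ t := by
  rw [Fin.univ_succ, Nat.multinomial_cons]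
  simp [Nat.multinomial, sum_map, prod_map]

theorem Finset.sum_range_sum_range_sub_succ {M : Type*} [AddCommMonoid M] (n : ℕ)
    (f : ℕ → ℕ → M) :
    ∑ s ∈ range (n + 1), ∑ c ∈ range (n - s + 1), f s c =
      ∑ a ∈ range (n + 1), ∑ s ∈ range (a + 1), f s (a - s) := by
  rw [sum_range_diag_flip]
  exact sum_congr rfl fun s hs => by rw [Nat.sub_add_comm (mem_range_succ_iff.mp hs)]

theorem abelSum_succ (m n : ℕ) (x : Fin (m + 1) → ℝ) (p : Fin (m + 1) → ℤ) :
    abelSum (m + 1) n x p =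
      ∑ a ∈ range (n + 1), (n.choose a : ℝ) * ((a : ℝ) + x 0) ^ ((a : ℤ) + p 0) *
        abelSum m (n - a) (Fin.tail x) (Fin.tail p) := by
  simp only [abelSum, Finset.Nat.sum_antidiagonalTuple_succ, mul_sum]
  refine sum_congr rfl fun a ha => sum_congr rfl fun t ht => ?_
  rw [mem_range] at ha
  rw [Finset.Nat.mem_antidiagonalTuple] at ht
  rw [Nat.multinomial_univ_fin_cons, ht, Nat.add_sub_cancel' (by omega), Fin.prod_univ_succ]
  simp only [Fin.cons_zero, Fin.cons_succ, Fin.tail, Nat.cast_mul]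
  ring

theorem sum_descFactorial_mul_sub_mul_pow {R : Type*} [CommRing R] (a : ℕ) (y : R) :
    ∑ s ∈ range (a + 1), (a.descFactorial s : R) * (y - ((a - s : ℕ) : R)) * y ^ (a - s) =
      y ^ (a + 1) := by
  have telescope : ∀ s ∈ range (a + 1),
      (a.descFactorial s : R) * (y - ((a - s : ℕ) : R)) * y ^ (a - s) =
        (a.descFactorial s : R) * y ^ (a + 1 - s) -
          (a.descFactorial (s + 1) : R) * y ^ (a + 1 - (s + 1)) := by
    intro s hs
    rw [mem_range] at hs
    rw [Nat.descFactorial_succ, show a + 1 - s = a - s + 1 by omega,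
      show a + 1 - (s + 1) = a - s by omega]
    push_cast
    ring
  rw [sum_congr rfl telescope, sum_range_sub', Nat.descFactorial_of_lt (Nat.lt_succ_self a)]
  simp

theorem Nat.choose_mul_factorial_mul_choose_sub {n a s : ℕ} (hsa : s ≤ a) :
    n.choose s * s.factorial * (n - s).choose (a - s) = n.choose a * a.descFactorial s := by
  rw [Nat.descFactorial_eq_factorial_mul_choose, mul_left_comm, Nat.choose_mul hsa]
  ring

theorem sum_choose_mul_zpow {K : Type*} [Field K] (n a : ℕ) (x : K) (hx : (a : K) + x ≠ 0)
    (q : ℤ) :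
    ∑ s ∈ range (a + 1), (n.choose s : K) * s.factorial * (x + s) * ((n - s).choose (a - s) *
        (((a - s : ℕ) : K) + (x + s)) ^ (((a - s : ℕ) : ℤ) + (q - 1))) =
      n.choose a * ((a : K) + x) ^ ((a : ℤ) + q) := by
  set y : K := a + x
  have term : ∀ s ∈ range (a + 1),
      (n.choose s : K) * s.factorial * (x + s) * ((n - s).choose (a - s) *
        (((a - s : ℕ) : K) + (x + s)) ^ (((a - s : ℕ) : ℤ) + (q - 1))) =
      n.choose a * y ^ (q - 1) *
        ((a.descFactorial s : K) * (y - ((a - s : ℕ) : K)) * y ^ (a - s)) := by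
    intro s hs
    have hsa : s ≤ a := Nat.lt_succ_iff.mp (mem_range.mp hs)
    have hcoeff : (n.choose s : K) * s.factorial * (n - s).choose (a - s) =
        n.choose a * a.descFactorial s := by
      exact_mod_cast congrArg (Nat.cast (R := K)) (Nat.choose_mul_factorial_mul_choose_sub hsa)
    have hbase : ((a - s : ℕ) : K) + (x + s) = y := by
      rw [Nat.cast_sub hsa]; ring
    rw [hbase, zpow_add₀ hx, zpow_natCast, show x + s = y - ((a - s : ℕ) : K) by
      rw [← hbase]; ring]
    linear_combination (y - ((a - s : ℕ) : K)) * y ^ (a - s) * y ^ (q - 1) * hcoeff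
  rw [sum_congr rfl term, ← mul_sum, sum_descFactorial_mul_sub_mul_pow,
    show (a : ℤ) + q = ((a + 1 : ℕ) : ℤ) + (q - 1) by push_cast; ring, zpow_add₀ hx, zpow_natCast]
  ring

/-- The recurrence from Abel's multinomial theorem:
`A_n(x_1,…,x_m; p_1,…,p_m)
  = Σ_{s=0}^n C(n,s) s! (x_1 + s) A_{n-s}(x_1+s, x_2,…,x_m; p_1-1, p_2,…,p_m)`. -/
theorem abelSum_recurrence (m n : ℕ) (hm : 1 ≤ m) (x : Fin m → ℝ) (hx : ∀ i, 0 < x i)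
    (p : Fin m → ℤ) :
    abelSum m n x p =
      ∑ s ∈ Finset.range (n + 1),
        (Nat.choose n s : ℝ) * (Nat.factorial s) * (x ⟨0, hm⟩ + s) *
          abelSum m (n - s) (Function.update x ⟨0, hm⟩ (x ⟨0, hm⟩ + s))
            (Function.update p ⟨0, hm⟩ (p ⟨0, hm⟩ - 1)) := by
  obtain ⟨m, rfl⟩ : ∃ k, m = k + 1 := ⟨m - 1, by omega⟩
  have h0 : (⟨0, hm⟩ : Fin (m + 1)) = 0 := rfl
  simp only [h0, abelSum_succ, Fin.tail_update_zero, Function.update_self, mul_sum]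
  rw [sum_range_sum_range_sub_succ]
  refine sum_congr rfl fun a _ => ?_
  have hsum := sum_choose_mul_zpow n a (x 0) (by have := hx 0; positivity) (p 0)
  rw [← hsum, sum_mul]
  refine sum_congr rfl fun s hs => ?_
  rw [show n - s - (a - s) = n - a by grind]
  ring
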